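/- arXiv:2601.02562 — 2 statements merged into one kernel-verified Lean document; each statement's English description precedes it below -/
import Mathlib

section
/- Let E be a real inner product space and f : E → ℝ differentiable with gradient ∇f. If f is μ-strongly convex (μ > 0) and ∇f is L-Lipschitz (L ≥ μ), then for all x, y ∈ E: ⟪∇f(x) − ∇f(y), x − y⟫ ≥ (μL/(μ+L))‖x − y‖² + (1/(μ+L))‖∇f(x) − ∇f(y)‖². -/
/-!
Put `g = f - (μ/2)‖·‖²`, with gradient `G = ∇f - μ id`. Then `g` is convex and, since `∇f` is
`L`-Lipschitz, `((L - μ)/2)‖·‖² - g` is convex as well. For such a function the gradient is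
co-coercive, `‖G x - G y‖² ≤ (L - μ) ⟪G x - G y, x - y⟫` (Baillon–Haddad), and expanding `G`
turns this into the claim. When `L = μ` the claim follows directly from strong monotonicity
`⟪∇f x - ∇f y, x - y⟫ ≥ μ‖x - y‖²` and the Lipschitz bound.
-/

open scoped RealInnerProductSpace

open Set AffineMap

section Gradient

variable {E : Type*} [NormedAddCommGroup E] [InnerProductSpace ℝ E] {φ : E → ℝ} {G : E → E}

lemma hasFDerivAt_half_mul_norm_sq (c : ℝ) (x : E) :
    HasFDerivAt (fun z => c / 2 * ‖z‖ ^ 2) (innerSL ℝ (c • x)) x := by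
  have h := (hasStrictFDerivAt_norm_sq x).hasFDerivAt.const_mul (c / 2)
  rwa [← Nat.cast_smul_eq_nsmul ℝ, smul_smul, Nat.cast_ofNat, div_mul_cancel₀ c two_ne_zero,
    ← map_smul] at h

lemma HasFDerivAt.half_mul_norm_sq_sub {g x : E} (hd : HasFDerivAt φ (innerSL ℝ g) x) (c : ℝ) :
    HasFDerivAt (fun z => c / 2 * ‖z‖ ^ 2 - φ z) (innerSL ℝ (c • x - g)) x := by
  rw [map_sub]
  exact (hasFDerivAt_half_mul_norm_sq c x).sub hd

lemma HasFDerivAt.sub_half_mul_norm_sq {g x : E} (hd : HasFDerivAt φ (innerSL ℝ g) x) (c : ℝ) :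
    HasFDerivAt (fun z => φ z - c / 2 * ‖z‖ ^ 2) (innerSL ℝ (g - c • x)) x := by
  rw [map_sub]
  exact hd.sub (hasFDerivAt_half_mul_norm_sq c x)

lemma hasDerivAt_comp_lineMap (hd : ∀ z, HasFDerivAt φ (innerSL ℝ (G z)) z) (x y : E) (t : ℝ) :
    HasDerivAt (φ ∘ lineMap x y) ⟪G (lineMap x y t), y - x⟫ t := by
  simpa using (hd _).comp_hasDerivAt t hasDerivAt_lineMap

lemma ConvexOn.add_inner_le (hd : ∀ z, HasFDerivAt φ (innerSL ℝ (G z)) z)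
    (hφ : ConvexOn ℝ univ φ) (x y : E) : φ x + ⟪G x, y - x⟫ ≤ φ y := by
  have h := (hφ.comp_affineMap (lineMap x y)).le_slope_of_hasDerivAt (mem_univ 0) (mem_univ 1)
    zero_lt_one (hasDerivAt_comp_lineMap hd x y 0)
  simp only [lineMap_apply_zero, lineMap_apply_one, slope_def_field, Function.comp_apply,
    sub_zero, div_one] at h
  linarith

lemma ConvexOn.inner_sub_nonneg (hd : ∀ z, HasFDerivAt φ (innerSL ℝ (G z)) z)
    (hφ : ConvexOn ℝ univ φ) (x y : E) : 0 ≤ ⟪G x - G y, x - y⟫ := by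
  have hxy := hφ.add_inner_le hd x y
  have hyx := hφ.add_inner_le hd y x
  rw [← neg_sub x y, inner_neg_right] at hxy
  rw [inner_sub_left]
  linarith

lemma convexOn_univ_of_inner_sub_nonneg (hd : ∀ z, HasFDerivAt φ (innerSL ℝ (G z)) z)
    (hG : ∀ x y, 0 ≤ ⟪G x - G y, x - y⟫) : ConvexOn ℝ univ φ := by
  refine ⟨convex_univ, fun x _ y _ a b ha hb hab => ?_⟩
  have hline : ConvexOn ℝ univ (φ ∘ lineMap (k := ℝ) x y) := by
    refine Monotone.convexOn_univ_of_deriv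
      (fun t => (hasDerivAt_comp_lineMap hd x y t).differentiableAt) fun s t hst => ?_
    rw [(hasDerivAt_comp_lineMap hd x y s).deriv, (hasDerivAt_comp_lineMap hd x y t).deriv]
    have h := hG (lineMap x y t) (lineMap (k := ℝ) x y s)
    have hsub : lineMap x y t - lineMap (k := ℝ) x y s = (t - s) • (y - x) := by
      simp only [lineMap_apply_module', sub_smul]
      abel
    rw [hsub, real_inner_smul_right, inner_sub_left] at h
    rcases hst.eq_or_lt with rfl | hlt
    · rfl
    · linarith [nonneg_of_mul_nonneg_right h (sub_pos.2 hlt)]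
  obtain rfl : a = 1 - b := by linarith
  simpa [lineMap_apply_module] using hline.2 (mem_univ 0) (mem_univ 1) ha hb hab

lemma ConvexOn.le_add_inner_add_half_mul_norm_sq
    (hd : ∀ z, HasFDerivAt φ (innerSL ℝ (G z)) z) {c : ℝ}
    (hφ : ConvexOn ℝ univ fun z => c / 2 * ‖z‖ ^ 2 - φ z) (x y : E) :
    φ y ≤ φ x + ⟪G x, y - x⟫ + c / 2 * ‖y - x‖ ^ 2 := by
  have h := hφ.add_inner_le (fun z => (hd z).half_mul_norm_sq_sub c) x y
  rw [inner_sub_left, real_inner_smul_left, inner_sub_right, real_inner_self_eq_norm_sq] at h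
  rw [norm_sub_sq_real, real_inner_comm x y]
  linarith

lemma ConvexOn.add_inner_add_norm_sq_div_le (hd : ∀ z, HasFDerivAt φ (innerSL ℝ (G z)) z)
    (hφ : ConvexOn ℝ univ φ) {c : ℝ} (hc : 0 < c)
    (hsmooth : ConvexOn ℝ univ fun z => c / 2 * ‖z‖ ^ 2 - φ z) (x y : E) :
    φ x + ⟪G x, y - x⟫ + ‖G y - G x‖ ^ 2 / (2 * c) ≤ φ y := by
  -- `ψ = φ - ⟪G x, ·⟫` is minimised at `x`, and the step from `y` to `y - c⁻¹ • ∇ψ y` lowers it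
  -- by at least `‖∇ψ y‖² / (2c)`.
  set ψ : E → ℝ := fun z => φ z - ⟪G x, z⟫
  have hdψ (z : E) : HasFDerivAt ψ (innerSL ℝ (G z - G x)) z := by
    rw [map_sub]
    exact (hd z).sub (innerSL ℝ (G x)).hasFDerivAt
  have hψ : ConvexOn ℝ univ ψ := hφ.sub ((innerSL ℝ (G x)).toLinearMap.concaveOn convex_univ)
  have hψsmooth : ConvexOn ℝ univ fun z => c / 2 * ‖z‖ ^ 2 - ψ z := by
    refine (hsmooth.add ((innerSL ℝ (G x)).toLinearMap.convexOn convex_univ)).congr fun z _ => ?_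
    simp only [ψ, Pi.add_apply, ContinuousLinearMap.coe_coe, innerSL_apply_apply]
    ring
  have hmin (w : E) : ψ x ≤ ψ w := by simpa using hψ.add_inner_le hdψ x w
  set w := y - c⁻¹ • (G y - G x)
  have hwy : w - y = -(c⁻¹ • (G y - G x)) := by simp [w]
  have hdesc := hψsmooth.le_add_inner_add_half_mul_norm_sq hdψ y w
  rw [hwy, inner_neg_right, real_inner_smul_right, real_inner_self_eq_norm_sq, norm_neg,
    norm_smul, mul_pow, Real.norm_eq_abs, sq_abs] at hdesc
  have hψxw := hmin w
  have hstep : -(c⁻¹ * ‖G y - G x‖ ^ 2) + c / 2 * (c⁻¹ ^ 2 * ‖G y - G x‖ ^ 2)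
      = -(‖G y - G x‖ ^ 2 / (2 * c)) := by
    field_simp
    ring
  simp only [ψ, inner_sub_right] at hdesc hψxw ⊢
  linarith

lemma ConvexOn.norm_sub_sq_le_mul_inner (hd : ∀ z, HasFDerivAt φ (innerSL ℝ (G z)) z)
    (hφ : ConvexOn ℝ univ φ) {c : ℝ} (hc : 0 < c)
    (hsmooth : ConvexOn ℝ univ fun z => c / 2 * ‖z‖ ^ 2 - φ z) (x y : E) :
    ‖G x - G y‖ ^ 2 ≤ c * ⟪G x - G y, x - y⟫ := by
  have hxy := hφ.add_inner_add_norm_sq_div_le hd hc hsmooth x y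
  have hyx := hφ.add_inner_add_norm_sq_div_le hd hc hsmooth y x
  rw [norm_sub_rev] at hxy
  rw [← neg_sub x y, inner_neg_right] at hxy
  have hsum : ‖G x - G y‖ ^ 2 / (2 * c) + ‖G x - G y‖ ^ 2 / (2 * c) = ‖G x - G y‖ ^ 2 / c := by
    ring
  rw [← div_le_iff₀' hc, inner_sub_left]
  linarith

lemma convexOn_half_mul_norm_sq_sub_of_lipschitz (hd : ∀ z, HasFDerivAt φ (innerSL ℝ (G z)) z)
    {L : ℝ} (hG : ∀ x y, ‖G x - G y‖ ≤ L * ‖x - y‖) :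
    ConvexOn ℝ univ fun z => L / 2 * ‖z‖ ^ 2 - φ z := by
  refine convexOn_univ_of_inner_sub_nonneg (fun z => (hd z).half_mul_norm_sq_sub L) fun x y => ?_
  have hsub : L • x - G x - (L • y - G y) = L • (x - y) - (G x - G y) := by
    rw [smul_sub]
    abel
  rw [hsub, inner_sub_left, real_inner_smul_left, real_inner_self_eq_norm_sq]
  have hcs := real_inner_le_norm (G x - G y) (x - y)
  nlinarith [mul_le_mul_of_nonneg_right (hG x y) (norm_nonneg (x - y))]

lemma norm_sub_smul_sq_sub_mul_inner (u d : E) (a b : ℝ) :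
    ‖u - a • d‖ ^ 2 - (b - a) * ⟪u - a • d, d⟫
      = ‖u‖ ^ 2 + a * b * ‖d‖ ^ 2 - (a + b) * ⟪u, d⟫ := by
  rw [norm_sub_sq_real, inner_sub_left, norm_smul, real_inner_smul_left, real_inner_smul_right,
    real_inner_self_eq_norm_sq, Real.norm_eq_abs, mul_pow, sq_abs]
  ring

end Gradient

/-- **Strongly convex + Lipschitz-gradient interpolation inequality.** If `f` is
`μ`-strongly convex and its gradient is `L`-Lipschitz (`L ≥ μ`), then
`⟪∇f x − ∇f y, x − y⟫ ≥ (μL/(μ+L))‖x − y‖² + (1/(μ+L))‖∇f x − ∇f y‖²`. -/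
theorem strongly_convex_lipschitz_grad_inner_ge
    {E : Type*} [NormedAddCommGroup E] [InnerProductSpace ℝ E]
    (f : E → ℝ) (gradf : E → E)
    (hdiff : ∀ x : E, HasFDerivAt f ((innerSL ℝ (gradf x)) : E →L[ℝ] ℝ) x)
    (μ L : ℝ) (hμ : 0 < μ) (hL : μ ≤ L)
    (hsc : ConvexOn ℝ Set.univ (fun x => f x - μ / 2 * ‖x‖ ^ 2))
    (hlip : ∀ x y : E, ‖gradf x - gradf y‖ ≤ L * ‖x - y‖) :
    ∀ x y : E,
      ⟪gradf x - gradf y, x - y⟫ ≥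
        μ * L / (μ + L) * ‖x - y‖ ^ 2 + 1 / (μ + L) * ‖gradf x - gradf y‖ ^ 2 := by
  intro x y
  have hg (z : E) := (hdiff z).sub_half_mul_norm_sq μ
  have hGsub : gradf x - μ • x - (gradf y - μ • y) = gradf x - gradf y - μ • (x - y) := by
    rw [smul_sub]
    abel
  have key : ‖gradf x - gradf y‖ ^ 2 + μ * L * ‖x - y‖ ^ 2
      ≤ (μ + L) * ⟪gradf x - gradf y, x - y⟫ := by
    rcases hL.eq_or_lt with rfl | hlt
    · have hmono := hsc.inner_sub_nonneg hg x y
      rw [hGsub, inner_sub_left, real_inner_smul_left, real_inner_self_eq_norm_sq] at hmono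
      have hlip_sq := pow_le_pow_left₀ (norm_nonneg _) (hlip x y) 2
      nlinarith
    · have hsmooth : ConvexOn ℝ Set.univ
          fun z => (L - μ) / 2 * ‖z‖ ^ 2 - (f z - μ / 2 * ‖z‖ ^ 2) :=
        (convexOn_half_mul_norm_sq_sub_of_lipschitz hdiff hlip).congr fun z _ => by ring
      have hcoco := hsc.norm_sub_sq_le_mul_inner hg (sub_pos.2 hlt) hsmooth x y
      rw [hGsub] at hcoco
      linarith [norm_sub_smul_sq_sub_mul_inner (gradf x - gradf y) (x - y) μ L]
  have hμL : 0 < μ + L := by linarith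
  calc μ * L / (μ + L) * ‖x - y‖ ^ 2 + 1 / (μ + L) * ‖gradf x - gradf y‖ ^ 2
      = (‖gradf x - gradf y‖ ^ 2 + μ * L * ‖x - y‖ ^ 2) / (μ + L) := by
        field_simp
        ring
    _ ≤ ⟪gradf x - gradf y, x - y⟫ := by rwa [div_le_iff₀' hμL]
end

section
/- Let N ≥ 1, let s₁, …, s_{N+1} be exchangeable real-valued random variables that are almost surely pairwise distinct, and let k ∈ {1, …, N}. If s_{(k)} denotes the k-th smallest value among s₁, …, s_N, then P( s_{N+1} ≤ s_{(k)} ) = k/(N+1). -/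
open MeasureTheory

/-- The `k`-th smallest value (the `k`-th order statistic, `1 ≤ k ≤ N`) of the values
`v 0, …, v (N-1)`: entry at index `k - 1` of the sorted list of values. -/
noncomputable def kthSmallest {N : ℕ} (v : Fin N → ℝ) (k : ℕ) : ℝ :=
  ((List.ofFn v).insertionSort (· ≤ ·)).getD (k - 1) 0

/-! With `strictRank x i = #{j | x j < x i}`, the event `s_{N+1} ≤ s_{(k)}` is exactly
`strictRank s (N+1) < k`. By exchangeability all `N+1` coordinates have the same probability of
having strict rank below `k`, and when the values are distinct exactly `k` coordinates do; so
these `N+1` equal probabilities sum to `k`. -/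

open Finset

namespace List

variable {α : Type*}

theorem SortedLE.le_getElem_iff_countP_lt_le [LinearOrder α] {l : List α} (hl : l.SortedLE)
    {m : ℕ} (hm : m < l.length) (t : α) : t ≤ l[m] ↔ l.countP (· < t) ≤ m := by
  constructor
  · intro ht
    have htake : (l.take m).countP (· < t) ≤ m := countP_le_length.trans (by simp)
    have hdrop : (l.drop m).countP (· < t) = 0 := by
      refine countP_eq_zero.2 fun a ha => ?_
      obtain ⟨i, hi, rfl⟩ := getElem_of_mem ha
      simpa only [getElem_drop, decide_eq_true_eq, not_lt] using
        ht.trans (hl.getElem_le_getElem_of_le (Nat.le_add_right m i))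
    rw [← take_append_drop m l, countP_append]
    omega
  · intro hcount
    by_contra! ht
    have htake : (l.take (m + 1)).countP (· < t) = m + 1 := by
      rw [countP_eq_length.2 fun a ha => ?_, length_take]
      · omega
      obtain ⟨i, hi, rfl⟩ := getElem_of_mem ha
      simp only [length_take] at hi
      simpa only [getElem_take, decide_eq_true_eq] using
        (hl.getElem_le_getElem_of_le (by omega : i ≤ m)).trans_lt ht
    have := (take_sublist (m + 1) l).countP_le (p := (· < t))
    omega

theorem countP_ofFn {n : ℕ} (f : Fin n → α) (p : α → Bool) :
    (ofFn f).countP p = #{i | p (f i)} := by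
  rw [ofFn_eq_map, countP_map, countP_eq_length_filter,
    ← toFinset_card_of_nodup ((nodup_finRange n).filter _)]
  congr 1
  ext
  simp

end List

theorem le_kthSmallest_iff {N : ℕ} (v : Fin N → ℝ) {k : ℕ} (hk1 : 1 ≤ k) (hkN : k ≤ N) (t : ℝ) :
    t ≤ kthSmallest v k ↔ #{i | v i < t} < k := by
  have hlen : k - 1 < ((List.ofFn v).insertionSort (· ≤ ·)).length := by
    rw [List.length_insertionSort, List.length_ofFn]; omega
  rw [kthSmallest, List.getD_eq_getElem _ _ hlen,
    List.sortedLE_insertionSort.le_getElem_iff_countP_lt_le hlen,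
    (List.perm_insertionSort _ _).countP_eq, List.countP_ofFn]
  simp only [decide_eq_true_eq]
  omega

section StrictRank

variable {ι α : Type*} [Fintype ι] [LinearOrder α]

def strictRank (x : ι → α) (i : ι) : ℕ := #{j | x j < x i}

theorem strictRank_comp_perm (x : ι → α) (σ : Equiv.Perm ι) (i : ι) :
    strictRank (x ∘ σ) i = strictRank x (σ i) :=
  card_equiv σ (by simp)

theorem strictRank_lt_card (x : ι → α) (i : ι) : strictRank x i < Fintype.card ι :=
  card_lt_univ_of_notMem (x := i) (by simp)

theorem strictRank_lt_strictRank {x : ι → α} {i j : ι} (h : x i < x j) :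
    strictRank x i < strictRank x j := by
  refine card_lt_card ⟨fun l hl => ?_, fun hsub => ?_⟩
  · simp only [mem_filter, mem_univ, true_and] at hl ⊢
    exact hl.trans h
  · exact lt_irrefl _ (mem_filter.1 (hsub (mem_filter.2 ⟨mem_univ _, h⟩))).2

theorem strictRank_injective {x : ι → α} (hx : Function.Injective x) :
    Function.Injective (strictRank x) := by
  intro i j hij
  rcases lt_trichotomy (x i) (x j) with h | h | h
  · exact absurd hij (strictRank_lt_strictRank h).ne
  · exact hx h
  · exact absurd hij (strictRank_lt_strictRank h).ne'

theorem card_strictRank_lt {x : ι → α} (hx : Function.Injective x) {k : ℕ}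
    (hk : k ≤ Fintype.card ι) : #{i | strictRank x i < k} = k := by
  classical
  have himage : univ.image (strictRank x) = range (Fintype.card ι) :=
    eq_of_subset_of_card_le (fun r hr => by
      obtain ⟨i, -, rfl⟩ := mem_image.1 hr
      exact mem_range.2 (strictRank_lt_card x i))
      (by rw [card_image_of_injective _ (strictRank_injective hx), card_range, card_univ])
  calc #{i | strictRank x i < k}
      = #((univ.filter fun i => strictRank x i < k).image (strictRank x)) :=
        (card_image_of_injective _ (strictRank_injective hx)).symm
    _ = #{r ∈ range (Fintype.card ι) | r < k} := by rw [← himage, filter_image]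
    _ = #(range k) := congrArg card (by ext; simp only [mem_filter, mem_range]; omega)
    _ = k := card_range k

theorem strictRank_last {N : ℕ} (x : Fin (N + 1) → α) :
    strictRank x (Fin.last N) = #{i : Fin N | x i.castSucc < x (Fin.last N)} := by
  rw [strictRank, Fin.univ_castSuccEmb, filter_cons, if_neg (lt_irrefl _), filter_map, card_map]
  rfl

theorem measurable_strictRank (i : ι) : Measurable fun x : ι → ℝ => strictRank x i := by
  classical
  simp_rw [strictRank, card_filter]
  exact Finset.measurable_sum _ fun j _ => Measurable.ite
    (measurableSet_lt (measurable_pi_apply j) (measurable_pi_apply i)) measurable_const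
    measurable_const

end StrictRank

section Exchangeable

variable {Ω ι : Type*} [MeasurableSpace Ω] {P : Measure Ω} [Fintype ι]

open scoped Classical in
theorem sum_measure_eq_of_ae_card_eq {A : ι → Set Ω} (hA : ∀ i, MeasurableSet (A i)) {k : ℕ}
    (hk : ∀ᵐ ω ∂P, #{i | ω ∈ A i} = k) : ∑ i, P (A i) = k * P Set.univ := by
  calc ∑ i, P (A i) = ∫⁻ ω, ∑ i, (A i).indicator 1 ω ∂P := by
        rw [lintegral_finsetSum _ fun i _ => measurable_one.indicator (hA i)]
        simp only [lintegral_indicator_one (hA _)]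
    _ = ∫⁻ _, (k : ENNReal) ∂P := lintegral_congr_ae <| hk.mono fun ω hω => by
        simp only [Set.indicator_apply, Pi.one_apply, sum_boole, hω]
    _ = k * P Set.univ := lintegral_const _

theorem ae_injective_of_measure_eq_zero {β : Type*} {s : ι → Ω → β}
    (hdist : ∀ i j, i ≠ j → P {ω | s i ω = s j ω} = 0) :
    ∀ᵐ ω ∂P, Function.Injective fun i => s i ω := by
  have : ∀ᵐ ω ∂P, ∀ i j, i ≠ j → s i ω ≠ s j ω :=
    ae_all_iff.2 fun i => ae_all_iff.2 fun j => by
      by_cases hij : i = j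
      · simp [hij]
      · simpa [ae_iff, hij] using hdist i j hij
  filter_upwards [this] with ω hω i j hij
  by_contra hne
  exact hω i j hne hij

theorem measure_strictRank_lt_eq_of_exchangeable {s : ι → Ω → ℝ} (hmeas : ∀ i, Measurable (s i))
    (hexch : ∀ σ : Equiv.Perm ι,
      Measure.map (fun ω => (fun i => s (σ i) ω)) P = Measure.map (fun ω => (fun i => s i ω)) P)
    (k : ℕ) (i j : ι) :
    P {ω | strictRank (fun l => s l ω) i < k} = P {ω | strictRank (fun l => s l ω) j < k} := by
  classical
  set σ := Equiv.swap i j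
  set B := {x : ι → ℝ | strictRank x j < k}
  have hB : MeasurableSet B := measurableSet_lt (measurable_strictRank j) measurable_const
  calc P {ω | strictRank (fun l => s l ω) i < k}
      = P ((fun ω l => s (σ l) ω) ⁻¹' B) := by
        congr 1
        ext ω
        change strictRank _ i < k ↔ strictRank ((fun l => s l ω) ∘ σ) j < k
        rw [strictRank_comp_perm, Equiv.swap_apply_right]
    _ = Measure.map (fun ω l => s (σ l) ω) P B :=
        (Measure.map_apply (measurable_pi_lambda _ fun l => hmeas _) hB).symm
    _ = Measure.map (fun ω l => s l ω) P B := by rw [hexch]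
    _ = P {ω | strictRank (fun l => s l ω) j < k} :=
        Measure.map_apply (measurable_pi_lambda _ hmeas) hB

theorem measure_strictRank_lt_of_exchangeable [IsProbabilityMeasure P] {s : ι → Ω → ℝ}
    (hmeas : ∀ i, Measurable (s i))
    (hexch : ∀ σ : Equiv.Perm ι,
      Measure.map (fun ω => (fun i => s (σ i) ω)) P = Measure.map (fun ω => (fun i => s i ω)) P)
    (hdist : ∀ i j, i ≠ j → P {ω | s i ω = s j ω} = 0) {k : ℕ} (hk : k ≤ Fintype.card ι)
    (i : ι) : P {ω | strictRank (fun l => s l ω) i < k} = k / Fintype.card ι := by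
  set A : ι → Set Ω := fun j => {ω | strictRank (fun l => s l ω) j < k}
  have hA (j : ι) : MeasurableSet (A j) :=
    measurableSet_lt ((measurable_strictRank j).comp (measurable_pi_lambda _ hmeas))
      measurable_const
  have hcount := sum_measure_eq_of_ae_card_eq hA <|
    (ae_injective_of_measure_eq_zero hdist).mono fun ω hω => by
      convert card_strictRank_lt hω hk
      rfl
  simp_rw [A, measure_strictRank_lt_eq_of_exchangeable hmeas hexch k _ i, sum_const, card_univ,
    nsmul_eq_mul, measure_univ, mul_one] at hcount
  have hne : (Fintype.card ι : ENNReal) ≠ 0 := Nat.cast_ne_zero.2 (Fintype.card_pos_iff.2 ⟨i⟩).ne'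
  rw [ENNReal.eq_div_iff hne (ENNReal.natCast_ne_top _), hcount]

end Exchangeable

theorem exact_coverage_kth_order_statistic_general
    {Ω : Type*} [MeasurableSpace Ω] (P : Measure Ω) [IsProbabilityMeasure P]
    (N : ℕ) (s : Fin (N + 1) → Ω → ℝ)
    (hmeas : ∀ i, Measurable (s i))
    (hexch : ∀ σ : Equiv.Perm (Fin (N + 1)),
      Measure.map (fun ω => (fun i => s (σ i) ω)) P
        = Measure.map (fun ω => (fun i => s i ω)) P)
    (hdist : ∀ i j : Fin (N + 1), i ≠ j → P {ω | s i ω = s j ω} = 0)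
    (k : ℕ) (hk1 : 1 ≤ k) (hkN : k ≤ N) :
    P {ω | s (Fin.last N) ω ≤ kthSmallest (fun i : Fin N => s i.castSucc ω) k}
      = (k : ENNReal) / (N + 1) := by
  have hevent : {ω | s (Fin.last N) ω ≤ kthSmallest (fun i : Fin N => s i.castSucc ω) k}
      = {ω | strictRank (fun l => s l ω) (Fin.last N) < k} := by
    ext ω
    simp only [Set.mem_ofPred_eq, le_kthSmallest_iff _ hk1 hkN, strictRank_last]
  rw [hevent, measure_strictRank_lt_of_exchangeable hmeas hexch hdist (by rw [Fintype.card_fin]; omega)]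
  simp

/-- **Exact conformal coverage.** If `s₁, …, s_{N+1}` are exchangeable and almost
surely pairwise distinct, and `s_{(k)}` is the `k`-th smallest value among
`s₁, …, s_N` (`1 ≤ k ≤ N`), then `P(s_{N+1} ≤ s_{(k)}) = k/(N+1)`. -/
theorem exact_coverage_kth_order_statistic
    {Ω : Type*} [MeasurableSpace Ω] (P : Measure Ω) [IsProbabilityMeasure P]
    (N : ℕ) (hN : 1 ≤ N) (s : Fin (N + 1) → Ω → ℝ)
    (hmeas : ∀ i, Measurable (s i))
    (hexch : ∀ σ : Equiv.Perm (Fin (N + 1)),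
      Measure.map (fun ω => (fun i => s (σ i) ω)) P
        = Measure.map (fun ω => (fun i => s i ω)) P)
    (hdist : ∀ i j : Fin (N + 1), i ≠ j → P {ω | s i ω = s j ω} = 0)
    (k : ℕ) (hk1 : 1 ≤ k) (hkN : k ≤ N) :
    P {ω | s (Fin.last N) ω ≤ kthSmallest (fun i : Fin N => s i.castSucc ω) k}
      = (k : ENNReal) / (N + 1) :=
  exact_coverage_kth_order_statistic_general P N s hmeas hexch hdist k hk1 hkN
end
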